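/- arXiv:1702.01634 — 2 statements merged into one kernel-verified Lean document; each statement's English description precedes it below -/
import Mathlib

section
/- The QPE order is preserved and reflected by tensor products: for density matrices ρ₁, σ₁ on M_{n₁}(ℂ) and ρ₂, σ₂ on M_{n₂}(ℂ), the Kronecker product satisfies ρ₁ ⊗ ρ₂ ⊑ σ₁ ⊗ σ₂ if and only if ρ₁ ⊑ σ₁ and ρ₂ ⊑ σ₂. -/
open Matrix
open scoped ComplexOrder

/-- The largest eigenvalue of a matrix (for a positive semidefinite matrix this
equals the operator norm). -/
noncomputable def maxEig {m : Type*} [Fintype m] (A : Matrix m m ℂ) : ℝ :=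
  sSup {a : ℝ | ∃ v : m → ℂ, v ≠ 0 ∧ A.mulVec v = (a : ℂ) • v}

/-- A density matrix: positive semidefinite with trace 1. -/
def IsDensity {m : Type*} [Fintype m] (ρ : Matrix m m ℂ) : Prop :=
  ρ.PosSemidef ∧ ρ.trace = 1

/-- The quantum positive evidence (QPE) order: ρ ⊑ σ iff σ⁺•ρ - ρ⁺•σ ≥ 0. -/
def QPE {m : Type*} [Fintype m] (ρ σ : Matrix m m ℂ) : Prop :=
  (maxEig σ • ρ - maxEig ρ • σ).PosSemidef

/-!
Since `QPE ρ σ` says `ρ⁺ • σ ≤ σ⁺ • ρ` in the Loewner order and `(ρ₁ ⊗ ρ₂)⁺ = ρ₁⁺ ρ₂⁺`, the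
tensor statement compares `(ρ₁⁺ • σ₁) ⊗ (ρ₂⁺ • σ₂)` with `(σ₁⁺ • ρ₁) ⊗ (σ₂⁺ • ρ₂)`.
The Kronecker product is monotone on positive matrices, because
`A₁ ⊗ A₂ - B₁ ⊗ B₂ = (A₁ - B₁) ⊗ A₂ + B₁ ⊗ (A₂ - B₂)`; this gives one direction.
Conversely, evaluating `B₁ ⊗ B₂ ≤ A₁ ⊗ A₂` on product vectors `w ⊗ x`, with `w` a unit eigenvector
of `B₁` for `B₁⁺`, gives `B₁⁺ • B₂ ≤ ⟨w, A₁ w⟩ • A₂ ≤ A₁⁺ • A₂`. For the matrices above both sides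
carry the positive factor `ρ₁⁺ σ₁⁺`, and cancelling it leaves `ρ₂ ⊑ σ₂`; `ρ₁ ⊑ σ₁` follows by
swapping the tensor factors.
-/

open scoped MatrixOrder Kronecker

theorem Matrix.dotProduct_kronecker_mulVec {R m l : Type*} [CommSemiring R] [StarRing R]
    [Fintype m] [Fintype l] (A : Matrix m m R) (B : Matrix l l R) (x : m → R) (y : l → R) :
    star (fun p : m × l => x p.1 * y p.2) ⬝ᵥ (A ⊗ₖ B) *ᵥ (fun p => x p.1 * y p.2) =
      (star x ⬝ᵥ A *ᵥ x) * (star y ⬝ᵥ B *ᵥ y) := by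
  have hmul : (A ⊗ₖ B) *ᵥ (fun p : m × l => x p.1 * y p.2) =
      fun p => (A *ᵥ x) p.1 * (B *ᵥ y) p.2 := by
    funext p
    simp only [mulVec, dotProduct, Fintype.sum_prod_type, kroneckerMap_apply, Finset.sum_mul_sum]
    exact Finset.sum_congr rfl fun _ _ => Finset.sum_congr rfl fun _ _ => by ring
  rw [hmul]
  simp only [dotProduct, Fintype.sum_prod_type, Finset.sum_mul_sum, Pi.star_apply, star_mul']
  exact Finset.sum_congr rfl fun _ _ => Finset.sum_congr rfl fun _ _ => by ring

theorem Matrix.kronecker_le_kronecker {𝕜 m l : Type*} [RCLike 𝕜] [Fintype m] [Fintype l]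
    {A₁ B₁ : Matrix m m 𝕜} {A₂ B₂ : Matrix l l 𝕜} (h₁ : B₁ ≤ A₁) (h₂ : B₂ ≤ A₂) (hB₁ : 0 ≤ B₁)
    (hA₂ : 0 ≤ A₂) : B₁ ⊗ₖ B₂ ≤ A₁ ⊗ₖ A₂ := by
  have hsplit : A₁ ⊗ₖ A₂ - B₁ ⊗ₖ B₂ = (A₁ - B₁) ⊗ₖ A₂ + B₁ ⊗ₖ (A₂ - B₂) := by
    ext ⟨i, j⟩ ⟨i', j'⟩
    simp only [sub_apply, add_apply, kroneckerMap_apply]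
    ring
  rw [← sub_nonneg, nonneg_iff_posSemidef] at h₁ h₂
  rw [nonneg_iff_posSemidef] at hB₁ hA₂
  rw [le_iff, hsplit]
  exact (h₁.kronecker hA₂).add (hB₁.kronecker h₂)

theorem Matrix.kronecker_le_kronecker_comm {𝕜 m l : Type*} [RCLike 𝕜] {A₁ B₁ : Matrix m m 𝕜}
    {A₂ B₂ : Matrix l l 𝕜} (h : B₁ ⊗ₖ B₂ ≤ A₁ ⊗ₖ A₂) : B₂ ⊗ₖ B₁ ≤ A₂ ⊗ₖ A₁ := by
  have h' := (le_iff.1 h).submatrix (Prod.swap : l × m → m × l)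
  rw [le_iff]
  convert h' using 1
  ext ⟨i, j⟩ ⟨i', j'⟩
  simp [mul_comm]

section MaxEig

variable {m : Type*} [Fintype m] [DecidableEq m]

theorem setOf_hasEigenvector_eq_spectrum (A : Matrix m m ℂ) :
    {a : ℝ | ∃ v : m → ℂ, v ≠ 0 ∧ A *ᵥ v = (a : ℂ) • v} = spectrum ℝ A := by
  ext a
  rw [Set.mem_ofPred_eq, ← spectrum.algebraMap_mem_iff ℂ, ← Matrix.spectrum_toLin',
    ← Module.End.hasEigenvalue_iff_mem_spectrum, Module.End.hasEigenvalue_iff,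
    Submodule.ne_bot_iff]
  simp [and_comm]

theorem maxEig_eq_sSup_spectrum (A : Matrix m m ℂ) : maxEig A = sSup (spectrum ℝ A) :=
  congrArg sSup (setOf_hasEigenvector_eq_spectrum A)

namespace Matrix.IsHermitian

variable [Nonempty m] {A : Matrix m m ℂ}

theorem maxEig_mem_range_eigenvalues (hA : A.IsHermitian) :
    maxEig A ∈ Set.range hA.eigenvalues := by
  rw [maxEig_eq_sSup_spectrum, hA.spectrum_real_eq_range_eigenvalues]
  exact (Set.range_nonempty _).csSup_mem (Set.finite_range _)

theorem maxEig_le_iff (hA : A.IsHermitian) {r : ℝ} : maxEig A ≤ r ↔ A ≤ r • 1 := by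
  rw [maxEig_eq_sSup_spectrum, hA.spectrum_real_eq_range_eigenvalues,
    csSup_le_iff (Set.finite_range _).bddAbove (Set.range_nonempty _),
    ← hA.spectrum_real_eq_range_eigenvalues, ← le_algebraMap_iff_spectrum_le hA,
    Algebra.algebraMap_eq_smul_one]

theorem le_maxEig_smul_one (hA : A.IsHermitian) : A ≤ maxEig A • 1 :=
  hA.maxEig_le_iff.1 le_rfl

theorem exists_eigenvector_maxEig (hA : A.IsHermitian) :
    ∃ v : m → ℂ, star v ⬝ᵥ v = 1 ∧ A *ᵥ v = (maxEig A : ℂ) • v := by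
  obtain ⟨i, hi⟩ := hA.maxEig_mem_range_eigenvalues
  refine ⟨hA.eigenvectorBasis i, ?_, ?_⟩
  · rw [dotProduct_comm]
    exact hA.eigenvectorBasis.inner_eq_one i
  · rw [hA.mulVec_eigenvectorBasis, hi, RCLike.real_smul_eq_coe_smul (K := ℂ)]
    rfl

theorem dotProduct_mulVec_le_maxEig (hA : A.IsHermitian) {v : m → ℂ}
    (hv : star v ⬝ᵥ v = 1) : star v ⬝ᵥ A *ᵥ v ≤ maxEig A := by
  have h := (le_iff.1 hA.le_maxEig_smul_one).dotProduct_mulVec_nonneg v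
  rwa [sub_mulVec, smul_mulVec, one_mulVec, dotProduct_sub, dotProduct_smul, hv,
    Complex.real_smul, mul_one, sub_nonneg] at h

theorem maxEig_smul (hA : A.IsHermitian) {c : ℝ} (hc : 0 ≤ c) :
    maxEig (c • A) = c * maxEig A := by
  have hne : (spectrum ℝ A).Nonempty :=
    hA.spectrum_real_eq_range_eigenvalues ▸ Set.range_nonempty _
  rw [maxEig_eq_sSup_spectrum, maxEig_eq_sSup_spectrum, spectrum.smul_eq_smul _ _ hne,
    Real.sSup_smul_of_nonneg hc, smul_eq_mul]

end Matrix.IsHermitian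

theorem Matrix.PosSemidef.maxEig_nonneg [Nonempty m] {A : Matrix m m ℂ} (hA : A.PosSemidef) :
    0 ≤ maxEig A := by
  obtain ⟨i, hi⟩ := hA.1.maxEig_mem_range_eigenvalues
  exact hi ▸ hA.eigenvalues_nonneg i

end MaxEig

section KroneckerMaxEig

variable {m l : Type*} [Fintype m] [DecidableEq m] [Fintype l]

theorem Matrix.PosSemidef.maxEig_kronecker [DecidableEq l] [Nonempty m] [Nonempty l]
    {A : Matrix m m ℂ} {B : Matrix l l ℂ} (hA : A.PosSemidef) (hB : B.PosSemidef) :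
    maxEig (A ⊗ₖ B) = maxEig A * maxEig B := by
  have hAB := (hA.kronecker hB).isHermitian
  refine le_antisymm (hAB.maxEig_le_iff.2 ?_) ?_
  · rw [← smul_smul, ← one_kronecker_one, ← kronecker_smul, ← smul_kronecker]
    exact kronecker_le_kronecker hA.1.le_maxEig_smul_one hB.1.le_maxEig_smul_one hA.nonneg
      (smul_nonneg hB.maxEig_nonneg zero_le_one)
  · obtain ⟨v, hv, hAv⟩ := hA.1.exists_eigenvector_maxEig
    obtain ⟨w, hw, hBw⟩ := hB.1.exists_eigenvector_maxEig
    have hvw := dotProduct_kronecker_mulVec (1 : Matrix m m ℂ) (1 : Matrix l l ℂ) v w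
    rw [one_kronecker_one, one_mulVec, one_mulVec, one_mulVec, hv, hw, mul_one] at hvw
    have h := hAB.dotProduct_mulVec_le_maxEig hvw
    rw [dotProduct_kronecker_mulVec, hAv, hBw, dotProduct_smul, dotProduct_smul, hv, hw,
      smul_eq_mul, smul_eq_mul, mul_one, mul_one] at h
    exact_mod_cast h

theorem Matrix.maxEig_smul_le_of_kronecker_le [Nonempty m] {A₁ B₁ : Matrix m m ℂ}
    {A₂ B₂ : Matrix l l ℂ} (hA₁ : A₁.IsHermitian) (hB₁ : B₁.IsHermitian) (hA₂ : 0 ≤ A₂)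
    (hB₂ : B₂.IsHermitian) (h : B₁ ⊗ₖ B₂ ≤ A₁ ⊗ₖ A₂) : maxEig B₁ • B₂ ≤ maxEig A₁ • A₂ := by
  obtain ⟨w, hw, hBw⟩ := hB₁.exists_eigenvector_maxEig
  have hAw := hA₁.dotProduct_mulVec_le_maxEig hw
  refine .of_dotProduct_mulVec_nonneg
    (((nonneg_iff_posSemidef.1 hA₂).isHermitian.smul (.all _)).sub (hB₂.smul (.all _)))
    fun x => ?_
  have hwx := (le_iff.1 h).dotProduct_mulVec_nonneg (fun p => w p.1 * x p.2)
  rw [sub_mulVec, dotProduct_sub, dotProduct_kronecker_mulVec, dotProduct_kronecker_mulVec, hBw,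
    dotProduct_smul, hw, sub_nonneg] at hwx
  rw [sub_mulVec, dotProduct_sub, smul_mulVec, smul_mulVec, dotProduct_smul, dotProduct_smul,
    sub_nonneg, Complex.real_smul, Complex.real_smul]
  calc (maxEig B₁ : ℂ) * (star x ⬝ᵥ B₂ *ᵥ x)
      = (maxEig B₁ : ℂ) • 1 * (star x ⬝ᵥ B₂ *ᵥ x) := by simp
    _ ≤ (star w ⬝ᵥ A₁ *ᵥ w) * (star x ⬝ᵥ A₂ *ᵥ x) := hwx
    _ ≤ maxEig A₁ * (star x ⬝ᵥ A₂ *ᵥ x) :=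
      mul_le_mul_of_nonneg_right hAw ((nonneg_iff_posSemidef.1 hA₂).dotProduct_mulVec_nonneg x)

end KroneckerMaxEig

section Density

variable {m : Type*} [Fintype m] {ρ : Matrix m m ℂ}

theorem IsDensity.ne_zero (hρ : IsDensity ρ) : ρ ≠ 0 := fun h => by
  simpa [h] using hρ.2

theorem IsDensity.nonempty (hρ : IsDensity ρ) : Nonempty m := by
  by_contra hm
  exact hρ.ne_zero (Matrix.ext fun i => (not_nonempty_iff.1 hm).elim i)

theorem IsDensity.maxEig_pos [DecidableEq m] (hρ : IsDensity ρ) : 0 < maxEig ρ := by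
  have := hρ.nonempty
  by_contra! hle
  rw [hρ.1.1.maxEig_le_iff, zero_smul] at hle
  exact hρ.ne_zero (le_antisymm hle hρ.1.nonneg)

end Density

theorem QPE.iff_smul_le_smul {m : Type*} [Fintype m] {ρ σ : Matrix m m ℂ} :
    QPE ρ σ ↔ maxEig ρ • σ ≤ maxEig σ • ρ :=
  Iff.rfl

namespace QPE

variable {m l : Type*} [Fintype m] [DecidableEq m] [Fintype l] [DecidableEq l]
  {ρ₁ σ₁ : Matrix m m ℂ} {ρ₂ σ₂ : Matrix l l ℂ}

theorem kronecker_iff (hρ₁ : IsDensity ρ₁) (hσ₁ : IsDensity σ₁) (hρ₂ : IsDensity ρ₂)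
    (hσ₂ : IsDensity σ₂) : QPE (ρ₁ ⊗ₖ ρ₂) (σ₁ ⊗ₖ σ₂) ↔
    (maxEig ρ₁ • σ₁) ⊗ₖ (maxEig ρ₂ • σ₂) ≤ (maxEig σ₁ • ρ₁) ⊗ₖ (maxEig σ₂ • ρ₂) := by
  have := hρ₁.nonempty
  have := hρ₂.nonempty
  rw [iff_smul_le_smul, hσ₁.1.maxEig_kronecker hσ₂.1, hρ₁.1.maxEig_kronecker hρ₂.1,
    smul_kronecker, smul_kronecker, kronecker_smul, kronecker_smul, smul_smul, smul_smul]

theorem kronecker (hρ₁ : IsDensity ρ₁) (hσ₁ : IsDensity σ₁) (hρ₂ : IsDensity ρ₂)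
    (hσ₂ : IsDensity σ₂) (h₁ : QPE ρ₁ σ₁) (h₂ : QPE ρ₂ σ₂) : QPE (ρ₁ ⊗ₖ ρ₂) (σ₁ ⊗ₖ σ₂) :=
  (kronecker_iff hρ₁ hσ₁ hρ₂ hσ₂).2 <| kronecker_le_kronecker h₁ h₂
    (smul_nonneg hρ₁.maxEig_pos.le hσ₁.1.nonneg) (smul_nonneg hσ₂.maxEig_pos.le hρ₂.1.nonneg)

theorem of_kronecker_right (hρ₁ : IsDensity ρ₁) (hσ₁ : IsDensity σ₁) (hρ₂ : IsDensity ρ₂)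
    (hσ₂ : IsDensity σ₂) (h : QPE (ρ₁ ⊗ₖ ρ₂) (σ₁ ⊗ₖ σ₂)) : QPE ρ₂ σ₂ := by
  have := hρ₁.nonempty
  have hρ₁pos := hρ₁.maxEig_pos
  have hσ₁pos := hσ₁.maxEig_pos
  have hA₁ : (maxEig σ₁ • ρ₁).IsHermitian := hρ₁.1.1.smul (.all _)
  have hB₁ : (maxEig ρ₁ • σ₁).IsHermitian := hσ₁.1.1.smul (.all _)
  have hA₂ : 0 ≤ maxEig σ₂ • ρ₂ := smul_nonneg hσ₂.maxEig_pos.le hρ₂.1.nonneg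
  have hB₂ : (maxEig ρ₂ • σ₂).IsHermitian := hσ₂.1.1.smul (.all _)
  have h' := maxEig_smul_le_of_kronecker_le hA₁ hB₁ hA₂ hB₂
    ((kronecker_iff hρ₁ hσ₁ hρ₂ hσ₂).1 h)
  rw [hρ₁.1.1.maxEig_smul hσ₁pos.le, hσ₁.1.1.maxEig_smul hρ₁pos.le, mul_comm] at h'
  rw [iff_smul_le_smul]
  exact (smul_le_smul_iff_of_pos_left (mul_pos hσ₁pos hρ₁pos)).1 h'

theorem of_kronecker_left (hρ₁ : IsDensity ρ₁) (hσ₁ : IsDensity σ₁) (hρ₂ : IsDensity ρ₂)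
    (hσ₂ : IsDensity σ₂) (h : QPE (ρ₁ ⊗ₖ ρ₂) (σ₁ ⊗ₖ σ₂)) : QPE ρ₁ σ₁ :=
  of_kronecker_right hρ₂ hσ₂ hρ₁ hσ₁ <| (kronecker_iff hρ₂ hσ₂ hρ₁ hσ₁).2 <|
    kronecker_le_kronecker_comm <| (kronecker_iff hρ₁ hσ₁ hρ₂ hσ₂).1 h

end QPE

open Kronecker in
theorem stmt10 {n₁ n₂ : ℕ} (ρ₁ σ₁ : Matrix (Fin n₁) (Fin n₁) ℂ)
    (ρ₂ σ₂ : Matrix (Fin n₂) (Fin n₂) ℂ)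
    (hρ₁ : IsDensity ρ₁) (hσ₁ : IsDensity σ₁)
    (hρ₂ : IsDensity ρ₂) (hσ₂ : IsDensity σ₂) :
    QPE (ρ₁ ⊗ₖ ρ₂) (σ₁ ⊗ₖ σ₂) ↔ QPE ρ₁ σ₁ ∧ QPE ρ₂ σ₂ :=
  ⟨fun h => ⟨h.of_kronecker_left hρ₁ hσ₁ hρ₂ hσ₂, h.of_kronecker_right hρ₁ hσ₁ hρ₂ hσ₂⟩,
    fun ⟨h₁, h₂⟩ => h₁.kronecker hρ₁ hσ₁ hρ₂ hσ₂ h₂⟩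
end

section
/- Positive measurement updates are monotone for the QPE order: let ρ, σ be density matrices on M_n(ℂ) with ρ ⊑ σ, and let E be a nonzero effect (a positive semidefinite matrix with I − E positive semidefinite) such that there exists a nonzero vector v with σ · v = σ⁺ • v and E · v = E⁺ • v (where E⁺ is the largest eigenvalue of E). Then (1/tr(Eρ)) • (E^{1/2} ρ E^{1/2}) ⊑ (1/tr(Eσ)) • (E^{1/2} σ E^{1/2}). -/
set_option linter.unusedSectionVars false

open Matrix
open scoped ComplexOrder

/-- The square root of a positive semidefinite matrix, as `Matrix.PosSemidef.sqrt` was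
defined in the older Mathlib (that definition has since been removed). -/
noncomputable def Matrix.PosSemidef.sqrt {m : Type*} [Fintype m] [DecidableEq m]
    {A : Matrix m m ℂ} (hA : A.PosSemidef) : Matrix m m ℂ :=
  hA.1.eigenvectorUnitary.1 * diagonal ((↑) ∘ (√·) ∘ hA.1.eigenvalues) *
  (star hA.1.eigenvectorUnitary : Matrix m m ℂ)

namespace QPEAux

variable {m : Type*} [Fintype m] [DecidableEq m]

/-- real eigenvalue set -/
def ES (A : Matrix m m ℂ) : Set ℝ := {a : ℝ | ∃ v : m → ℂ, v ≠ 0 ∧ A.mulVec v = (a : ℂ) • v}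

lemma maxEig_def (A : Matrix m m ℂ) : maxEig A = sSup (ES A) := rfl

lemma real_smul_vec (r : ℝ) (v : m → ℂ) : r • v = (r : ℂ) • v := by
  funext i; simp [Complex.real_smul]

lemma real_smul_mat (r : ℝ) (A : Matrix m m ℂ) : r • A = (r : ℂ) • A := by
  ext i j; simp [Complex.real_smul]

lemma posSemidef_smul {A : Matrix m m ℂ} (hA : A.PosSemidef) {c : ℝ} (hc : 0 ≤ c) :
    (c • A).PosSemidef := by
  rw [real_smul_mat]
  refine Matrix.PosSemidef.of_dotProduct_mulVec_nonneg ?_ ?_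
  · unfold Matrix.IsHermitian
    rw [conjTranspose_smul, hA.1]
    congr 1
    simp [Complex.ext_iff]
  · intro x
    rw [smul_mulVec, dotProduct_smul, smul_eq_mul]
    exact mul_nonneg (by exact_mod_cast hc) (hA.dotProduct_mulVec_nonneg x)

lemma dot_self_re_pos {v : m → ℂ} (hv : v ≠ 0) :
    0 < (dotProduct (star v) v).re ∧ (dotProduct (star v) v).im = 0 := by
  have h1 : 0 ≤ dotProduct (star v) v := dotProduct_star_self_nonneg v
  have h2 : dotProduct (star v) v ≠ 0 := by
    simpa [dotProduct_star_self_eq_zero] using hv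
  rw [Complex.le_def] at h1
  refine ⟨?_, by simpa using h1.2.symm⟩
  rcases lt_or_eq_of_le (by simpa using h1.1) with h | h
  · exact h
  · exfalso; exact h2 (Complex.ext h.symm (by simpa using h1.2.symm))

lemma nonneg_of_dot {r : ℝ} {v : m → ℂ} (hv : v ≠ 0)
    (h : 0 ≤ (r : ℂ) * dotProduct (star v) v) : 0 ≤ r := by
  obtain ⟨hre, him⟩ := dot_self_re_pos hv
  rw [Complex.le_def] at h
  have := h.1
  simp only [Complex.zero_re, Complex.mul_re, Complex.ofReal_re, Complex.ofReal_im] at this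
  rw [him] at this
  nlinarith

lemma eig_le {B : Matrix m m ℂ} {c a : ℝ} (hc : (c • (1 : Matrix m m ℂ) - B).PosSemidef)
    {v : m → ℂ} (hv0 : v ≠ 0) (hBv : B.mulVec v = (a : ℂ) • v) : a ≤ c := by
  have h1 := hc.dotProduct_mulVec_nonneg v
  have hmv : (c • (1 : Matrix m m ℂ) - B).mulVec v = ((c - a : ℝ) : ℂ) • v := by
    rw [sub_mulVec, hBv, real_smul_mat, smul_mulVec, one_mulVec]
    push_cast
    rw [sub_smul]
  rw [hmv, dotProduct_smul, smul_eq_mul] at h1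
  have := nonneg_of_dot hv0 h1
  linarith

end QPEAux
namespace QPEAux

variable {m : Type*} [Fintype m] [DecidableEq m]

lemma eigenvalues_mem_ES {A : Matrix m m ℂ} (hA : A.IsHermitian) (i : m) :
    hA.eigenvalues i ∈ ES A := by
  refine ⟨⇑(hA.eigenvectorBasis i), (by simpa using hA.eigenvectorBasis.orthonormal.ne_zero i), ?_⟩
  rw [← real_smul_vec]
  exact hA.mulVec_eigenvectorBasis i

variable [Nonempty m]

lemma sup_smul_one_sub_posSemidef {A : Matrix m m ℂ} (hA : A.IsHermitian) :
    ((Finset.univ.sup' Finset.univ_nonempty hA.eigenvalues) • (1 : Matrix m m ℂ) - A).PosSemidef := by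
  set M := Finset.univ.sup' Finset.univ_nonempty hA.eigenvalues with hM
  set U := (hA.eigenvectorUnitary : Matrix m m ℂ) with hU
  have hUU : U * star U = 1 := (Matrix.mem_unitaryGroup_iff).mp hA.eigenvectorUnitary.2
  have key : M • (1 : Matrix m m ℂ) - A
      = U * (Matrix.diagonal fun i => ((M - hA.eigenvalues i : ℝ) : ℂ)) * Uᴴ := by
    have hD : (Matrix.diagonal fun i => ((M - hA.eigenvalues i : ℝ) : ℂ))
        = (M : ℂ) • (1 : Matrix m m ℂ) - Matrix.diagonal (RCLike.ofReal ∘ hA.eigenvalues) := by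
      rw [smul_one_eq_diagonal, Matrix.diagonal_sub]
      congr 1
      funext i
      push_cast
      rfl
    have hspec := hA.spectral_theorem
    rw [Unitary.conjStarAlgAut_apply, ← hU] at hspec
    rw [hD, Matrix.mul_sub, Matrix.sub_mul, mul_smul_comm, smul_mul_assoc, mul_one,
      ← Matrix.star_eq_conjTranspose, hUU, ← hspec, real_smul_mat]
  rw [key]
  exact Matrix.PosSemidef.mul_mul_conjTranspose_same
    (Matrix.posSemidef_diagonal_iff.mpr fun i => by
      rw [Complex.zero_le_real]
      exact sub_nonneg.mpr (Finset.le_sup' _ (Finset.mem_univ i))) U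

lemma bddAbove_ES {A : Matrix m m ℂ} (hA : A.IsHermitian) : BddAbove (ES A) := by
  refine ⟨Finset.univ.sup' Finset.univ_nonempty hA.eigenvalues, ?_⟩
  rintro a ⟨v, hv0, hv⟩
  exact eig_le (sup_smul_one_sub_posSemidef hA) hv0 hv

lemma ES_nonempty {A : Matrix m m ℂ} (hA : A.IsHermitian) : (ES A).Nonempty :=
  ⟨_, eigenvalues_mem_ES hA (Classical.arbitrary m)⟩

lemma le_maxEig {A : Matrix m m ℂ} (hA : A.IsHermitian) {a : ℝ} (ha : a ∈ ES A) :
    a ≤ maxEig A :=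
  le_csSup (bddAbove_ES hA) ha

lemma maxEig_le {A : Matrix m m ℂ} (hA : A.IsHermitian) {c : ℝ}
    (hc : ∀ a ∈ ES A, a ≤ c) : maxEig A ≤ c :=
  csSup_le (ES_nonempty hA) hc

lemma maxEig_eq_sup {A : Matrix m m ℂ} (hA : A.IsHermitian) :
    maxEig A = Finset.univ.sup' Finset.univ_nonempty hA.eigenvalues := by
  refine le_antisymm (maxEig_le hA ?_) ?_
  · rintro a ⟨v, hv0, hv⟩
    exact eig_le (sup_smul_one_sub_posSemidef hA) hv0 hv
  · obtain ⟨i, -, hi⟩ := Finset.exists_mem_eq_sup' (Finset.univ_nonempty) hA.eigenvalues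
    rw [hi]
    exact le_maxEig hA (eigenvalues_mem_ES hA i)

lemma maxEig_smul_one_sub {A : Matrix m m ℂ} (hA : A.IsHermitian) :
    (maxEig A • (1 : Matrix m m ℂ) - A).PosSemidef := by
  rw [maxEig_eq_sup hA]
  exact sup_smul_one_sub_posSemidef hA

lemma maxEig_nonneg {A : Matrix m m ℂ} (hA : A.PosSemidef) : 0 ≤ maxEig A := by
  refine le_trans (hA.eigenvalues_nonneg (Classical.arbitrary m))
    (le_maxEig hA.1 (eigenvalues_mem_ES hA.1 _))

lemma maxEig_pos {A : Matrix m m ℂ} (hA : A.PosSemidef) (h0 : A ≠ 0) : 0 < maxEig A := by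
  obtain ⟨v, t, ht, hv0, hvt⟩ := hA.1.exists_eigenvector_of_ne_zero h0
  rw [real_smul_vec] at hvt
  have htn : 0 ≤ t := by
    have := hA.dotProduct_mulVec_nonneg v
    rw [hvt, dotProduct_smul, smul_eq_mul] at this
    exact nonneg_of_dot hv0 this
  have : t ≤ maxEig A := le_maxEig hA.1 ⟨v, hv0, hvt⟩
  cases' lt_or_eq_of_le htn with h h
  · linarith
  · exact absurd h.symm ht

lemma trace_eq_sum_eigenvalues {A : Matrix m m ℂ} (hA : A.IsHermitian) :
    A.trace = ((∑ i, hA.eigenvalues i : ℝ) : ℂ) := by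
  conv_lhs => rw [hA.spectral_theorem, Unitary.conjStarAlgAut_apply]
  rw [Matrix.trace_mul_cycle,
    (Matrix.mem_unitaryGroup_iff').mp hA.eigenvectorUnitary.2, Matrix.one_mul,
    Matrix.trace_diagonal]
  push_cast
  rfl

lemma trace_spec {A : Matrix m m ℂ} (hA : A.PosSemidef) :
    ∃ r : ℝ, A.trace = (r : ℂ) ∧ 0 ≤ r ∧ (A ≠ 0 → 0 < r) := by
  refine ⟨∑ i, hA.1.eigenvalues i, trace_eq_sum_eigenvalues hA.1,
    Finset.sum_nonneg fun i _ => hA.eigenvalues_nonneg i, ?_⟩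
  intro h0
  rcases lt_or_eq_of_le (Finset.sum_nonneg fun i (_ : i ∈ Finset.univ) =>
    hA.eigenvalues_nonneg i) with h | h
  · exact h
  exfalso
  apply h0
  have hall : ∀ i ∈ Finset.univ, hA.1.eigenvalues i = 0 :=
    (Finset.sum_eq_zero_iff_of_nonneg fun i _ => hA.eigenvalues_nonneg i).mp h.symm
  have : Matrix.diagonal (RCLike.ofReal ∘ hA.1.eigenvalues) = (0 : Matrix m m ℂ) := by
    rw [show RCLike.ofReal ∘ hA.1.eigenvalues = fun _ : m => (0 : ℂ) by
      funext i; simp [hall i (Finset.mem_univ i)], Matrix.diagonal_zero]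
  rw [hA.1.spectral_theorem, this, Unitary.conjStarAlgAut_apply, Matrix.mul_zero, Matrix.zero_mul]

end QPEAux

lemma Matrix.PosSemidef.posSemidef_sqrt {m : Type*} [Fintype m] [DecidableEq m]
    {A : Matrix m m ℂ} (hA : A.PosSemidef) : hA.sqrt.PosSemidef := by
  unfold Matrix.PosSemidef.sqrt
  have := (Matrix.posSemidef_diagonal_iff.mpr fun i => (by
      simp only [Function.comp_apply, Complex.zero_le_real]; exact Real.sqrt_nonneg _ :
      (0 : ℂ) ≤ (((↑) ∘ (√·) ∘ hA.1.eigenvalues : m → ℂ) i))).mul_mul_conjTranspose_same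
      (hA.1.eigenvectorUnitary : Matrix m m ℂ)
  rwa [← Matrix.star_eq_conjTranspose, ← Unitary.coe_star] at this

lemma Matrix.PosSemidef.sqrt_mul_self {m : Type*} [Fintype m] [DecidableEq m]
    {A : Matrix m m ℂ} (hA : A.PosSemidef) : hA.sqrt * hA.sqrt = A := by
  have hspec := hA.1.spectral_theorem
  rw [Unitary.conjStarAlgAut_apply] at hspec
  have hu : (star hA.1.eigenvectorUnitary : Matrix m m ℂ) * hA.1.eigenvectorUnitary = 1 := by
    simp
  have hD : diagonal (((↑) ∘ (√·) ∘ hA.1.eigenvalues : m → ℂ)) *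
      diagonal (((↑) ∘ (√·) ∘ hA.1.eigenvalues : m → ℂ))
      = diagonal (RCLike.ofReal ∘ hA.1.eigenvalues) := by
    rw [Matrix.diagonal_mul_diagonal]
    congr 1
    funext i
    simp only [Function.comp_apply, ← Complex.ofReal_mul,
      Real.mul_self_sqrt (hA.eigenvalues_nonneg i)]
    rfl
  unfold Matrix.PosSemidef.sqrt
  conv_rhs => rw [hspec]
  rw [show ∀ a b c d e f : Matrix m m ℂ, a * b * c * (d * e * f) = a * (b * (c * d) * e) * f by
    intros; simp only [Matrix.mul_assoc]]
  rw [hu, Matrix.mul_one, hD]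

namespace QPEAux

variable {m : Type*} [Fintype m] [DecidableEq m]

lemma sqrt_mulVec {E : Matrix m m ℂ} (hE : E.PosSemidef) {c : ℝ} (hc : 0 < c) {v : m → ℂ}
    (hv : E.mulVec v = (c : ℂ) • v) :
    hE.sqrt.mulVec v = ((Real.sqrt c : ℝ) : ℂ) • v := by
  set s := Real.sqrt c with hs
  have hs0 : 0 < s := Real.sqrt_pos.mpr hc
  set Q : Matrix m m ℂ := hE.sqrt + (s : ℂ) • 1 with hQ
  have hQpd : Q.PosDef := by
    refine Matrix.PosDef.posSemidef_add hE.posSemidef_sqrt ?_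
    rw [smul_one_eq_diagonal]
    exact Matrix.posDef_diagonal_iff.mpr fun i => by
      rw [Complex.zero_lt_real]; exact hs0
  set u : m → ℂ := hE.sqrt.mulVec v - (s : ℂ) • v with hu
  have hQu : Q.mulVec u = 0 := by
    rw [hu, hQ, Matrix.mulVec_sub, Matrix.add_mulVec, Matrix.add_mulVec,
      Matrix.mulVec_mulVec, hE.sqrt_mul_self, hv, Matrix.smul_mulVec,
      Matrix.smul_mulVec, Matrix.one_mulVec, Matrix.mulVec_smul]
    have hsc : (s : ℂ) * (s : ℂ) = (c : ℂ) := by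
      rw [← Complex.ofReal_mul, ← Real.mul_self_sqrt hc.le]
    rw [Matrix.one_mulVec, smul_smul, hsc]
    module
  have hu0 : u = 0 := by
    by_contra h0
    have := hQpd.re_dotProduct_pos h0
    rw [hQu] at this
    simp at this
  rw [sub_eq_zero] at hu0
  exact hu0

end QPEAux

open QPEAux

theorem stmt16 {n : ℕ} (ρ σ : Matrix (Fin n) (Fin n) ℂ)
    (hρ : IsDensity ρ) (hσ : IsDensity σ) (h : QPE ρ σ)
    (E : Matrix (Fin n) (Fin n) ℂ) (hE : E.PosSemidef) (hE1 : (1 - E).PosSemidef)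
    (hE0 : E ≠ 0)
    (hv : ∃ v : Fin n → ℂ, v ≠ 0 ∧ σ.mulVec v = (maxEig σ : ℂ) • v ∧
      E.mulVec v = (maxEig E : ℂ) • v) :
    QPE (((E * ρ).trace)⁻¹ • (hE.sqrt * ρ * hE.sqrt))
        (((E * σ).trace)⁻¹ • (hE.sqrt * σ * hE.sqrt)) := by
  classical
  obtain ⟨v, hv0, hσv, hEv⟩ := hv
  haveI : Nonempty (Fin n) := by
    rcases Nat.eq_zero_or_pos n with h0 | h0
    · exfalso
      subst h0
      have := hρ.2
      rw [Matrix.trace_eq_zero_of_isEmpty] at this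
      exact one_ne_zero this.symm
    · exact Fin.pos_iff_nonempty.mp h0
  have hρ0 : ρ ≠ 0 := by
    intro h0; rw [h0] at hρ; simpa using hρ.2
  have hσ0 : σ ≠ 0 := by
    intro h0; rw [h0] at hσ; simpa using hσ.2
  have sqrtH : hE.sqrtᴴ = hE.sqrt := hE.posSemidef_sqrt.1
  have conjPSD : ∀ X : Matrix (Fin n) (Fin n) ℂ, X.PosSemidef →
      (hE.sqrt * X * hE.sqrt).PosSemidef := by
    intro X hX
    have := hX.mul_mul_conjTranspose_same (B := hE.sqrt)
    rwa [sqrtH] at this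
  set Bρ := hE.sqrt * ρ * hE.sqrt with hBρdef
  set Bσ := hE.sqrt * σ * hE.sqrt with hBσdef
  have hBρ : Bρ.PosSemidef := conjPSD ρ hρ.1
  have hBσ : Bσ.PosSemidef := conjPSD σ hσ.1
  obtain ⟨rρ, hrρ_eq, hrρ0, hrρpos'⟩ := trace_spec hBρ
  obtain ⟨rσ, hrσ_eq, hrσ0, hrσpos'⟩ := trace_spec hBσ
  have htρ : (E * ρ).trace = (rρ : ℂ) := by
    rw [← hrρ_eq, hBρdef, Matrix.trace_mul_cycle, hE.sqrt_mul_self]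
  have htσ : (E * σ).trace = (rσ : ℂ) := by
    rw [← hrσ_eq, hBσdef, Matrix.trace_mul_cycle, hE.sqrt_mul_self]
  have hsmρ : ((E * ρ).trace)⁻¹ • Bρ = (rρ⁻¹ : ℝ) • Bρ := by
    rw [htρ, ← Complex.ofReal_inv, ← real_smul_mat]
  have hsmσ : ((E * σ).trace)⁻¹ • Bσ = (rσ⁻¹ : ℝ) • Bσ := by
    rw [htσ, ← Complex.ofReal_inv, ← real_smul_mat]
  rw [hsmρ, hsmσ]
  have hEpos : 0 < maxEig E := maxEig_pos hE hE0
  have hσpos : 0 < maxEig σ := maxEig_pos hσ.1 hσ0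
  have hρpos : 0 < maxEig ρ := maxEig_pos hρ.1 hρ0
  -- eigenvector computations
  have hsv : hE.sqrt.mulVec v = ((Real.sqrt (maxEig E) : ℝ) : ℂ) • v :=
    sqrt_mulVec hE hEpos hEv
  have hs2 : Real.sqrt (maxEig E) * Real.sqrt (maxEig E) = maxEig E :=
    Real.mul_self_sqrt hEpos.le
  have hBσv : Bσ.mulVec v = ((maxEig E * maxEig σ : ℝ) : ℂ) • v := by
    rw [hBσdef, ← Matrix.mulVec_mulVec, hsv, Matrix.mulVec_smul, ← Matrix.mulVec_mulVec,
      hσv, Matrix.mulVec_smul, hsv, smul_smul, smul_smul]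
    have hco : Real.sqrt (maxEig E) * maxEig σ * Real.sqrt (maxEig E)
        = maxEig E * maxEig σ := by rw [mul_comm, ← mul_assoc, hs2]
    congr 1
    exact_mod_cast hco
  have hrσpos : 0 < rσ := by
    refine hrσpos' ?_
    intro h0
    rw [h0, Matrix.zero_mulVec] at hBσv
    have hc : ((maxEig E * maxEig σ : ℝ) : ℂ) ≠ 0 := by
      exact_mod_cast (mul_pos hEpos hσpos).ne'
    exact hv0 ((smul_eq_zero.mp hBσv.symm).resolve_left hc)
  -- positivity of rρ via the QPE hypothesis
  have hD : (maxEig σ • ρ - maxEig ρ • σ).PosSemidef := h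
  have hconj : hE.sqrt * (maxEig σ • ρ - maxEig ρ • σ) * hE.sqrt
      = maxEig σ • Bρ - maxEig ρ • Bσ := by
    rw [hBρdef, hBσdef, Matrix.mul_sub, Matrix.sub_mul, mul_smul_comm, mul_smul_comm,
      smul_mul_assoc, smul_mul_assoc]
  have hTPSD : (maxEig σ • Bρ - maxEig ρ • Bσ).PosSemidef := by
    rw [← hconj]; exact conjPSD _ hD
  obtain ⟨rT, hrT_eq, hrT0, -⟩ := trace_spec hTPSD
  have hTr : 0 ≤ maxEig σ * rρ - maxEig ρ * rσ := by
    have heq : ((maxEig σ * rρ - maxEig ρ * rσ : ℝ) : ℂ) = (rT : ℂ) := by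
      rw [← hrT_eq, Matrix.trace_sub, real_smul_mat, real_smul_mat, Matrix.trace_smul,
        Matrix.trace_smul, hrρ_eq, hrσ_eq]
      simp [Complex.real_smul]
    have := Complex.ofReal_injective heq
    linarith [hrT0]
  have hrρpos : 0 < rρ := by
    nlinarith [hTr, mul_pos hρpos hrσpos, hσpos, mul_pos hσpos hrσpos]
  -- the scaled matrices
  have hρ'PSD : ((rρ⁻¹ : ℝ) • Bρ).PosSemidef := posSemidef_smul hBρ (inv_nonneg.mpr hrρ0)
  have hσ'PSD : ((rσ⁻¹ : ℝ) • Bσ).PosSemidef := posSemidef_smul hBσ (inv_nonneg.mpr hrσ0)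
  -- lower bound on maxEig of scaled σ
  have hσ'v : ((rσ⁻¹ : ℝ) • Bσ).mulVec v
      = (((rσ⁻¹ * (maxEig E * maxEig σ)) : ℝ) : ℂ) • v := by
    rw [real_smul_mat, Matrix.smul_mulVec, hBσv, smul_smul]
    congr 1
    push_cast
    ring
  have hb : rσ⁻¹ * (maxEig E * maxEig σ) ≤ maxEig ((rσ⁻¹ : ℝ) • Bσ) :=
    le_maxEig hσ'PSD.1 ⟨v, hv0, hσ'v⟩
  -- upper bound on maxEig of scaled ρ
  have h1 : maxEig ρ • (maxEig E • (1 : Matrix (Fin n) (Fin n) ℂ) - E)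
      + hE.sqrt * (maxEig ρ • (1 : Matrix (Fin n) (Fin n) ℂ) - ρ) * hE.sqrt
      = (maxEig E * maxEig ρ) • (1 : Matrix (Fin n) (Fin n) ℂ) - Bρ := by
    rw [hBρdef, Matrix.mul_sub, Matrix.sub_mul, mul_smul_comm, smul_mul_assoc, mul_one,
      hE.sqrt_mul_self]
    module
  have hub : ((rρ⁻¹ * (maxEig E * maxEig ρ)) • (1 : Matrix (Fin n) (Fin n) ℂ)
      - (rρ⁻¹ : ℝ) • Bρ).PosSemidef := by
    have h2 : (rρ⁻¹ * (maxEig E * maxEig ρ)) • (1 : Matrix (Fin n) (Fin n) ℂ)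
        - (rρ⁻¹ : ℝ) • Bρ
        = (rρ⁻¹ : ℝ) • ((maxEig E * maxEig ρ) • (1 : Matrix (Fin n) (Fin n) ℂ) - Bρ) := by
      rw [smul_sub, smul_smul]
    rw [h2, ← h1]
    exact posSemidef_smul
      ((posSemidef_smul (maxEig_smul_one_sub hE.1) (maxEig_nonneg hρ.1)).add
        (conjPSD _ (maxEig_smul_one_sub hρ.1.1)))
      (inv_nonneg.mpr hrρ0)
  have ha : maxEig ((rρ⁻¹ : ℝ) • Bρ) ≤ rρ⁻¹ * (maxEig E * maxEig ρ) := by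
    refine maxEig_le hρ'PSD.1 ?_
    rintro x ⟨w, hw0, hw⟩
    exact eig_le hub hw0 hw
  -- final assembly
  show (maxEig ((rσ⁻¹ : ℝ) • Bσ) • ((rρ⁻¹ : ℝ) • Bρ)
      - maxEig ((rρ⁻¹ : ℝ) • Bρ) • ((rσ⁻¹ : ℝ) • Bσ)).PosSemidef
  set a := maxEig ((rρ⁻¹ : ℝ) • Bρ) with ha_def
  set b := maxEig ((rσ⁻¹ : ℝ) • Bσ) with hb_def
  have key : b • ((rρ⁻¹ : ℝ) • Bρ) - a • ((rσ⁻¹ : ℝ) • Bσ)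
      = (b - rσ⁻¹ * (maxEig E * maxEig σ)) • ((rρ⁻¹ : ℝ) • Bρ)
        + (rρ⁻¹ * (maxEig E * maxEig ρ) - a) • ((rσ⁻¹ : ℝ) • Bσ)
        + (maxEig E / (rρ * rσ)) • (maxEig σ • Bρ - maxEig ρ • Bσ) := by
    match_scalars
    · field_simp
      ring
    · field_simp
      ring
  rw [key]
  refine Matrix.PosSemidef.add (Matrix.PosSemidef.add ?_ ?_) ?_
  · exact posSemidef_smul hρ'PSD (sub_nonneg.mpr hb)
  · exact posSemidef_smul hσ'PSD (sub_nonneg.mpr ha)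
  · exact posSemidef_smul hTPSD
      (div_nonneg hEpos.le (mul_nonneg hrρ0 hrσ0))
end
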